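/- arXiv:1309.6798 — 3 statements merged into one kernel-verified Lean document; each statement's English description precedes it below -/
import Mathlib

section
/- Let f : [a,b] ⊆ [0,∞) → [0,∞) be continuous and convex, 0 ≤ a < b, and p, q > 0. Then ∫_a^b (x-a)^p (b-x)^q f(x) f(a+b-x) dx ≤ ((b-a)^{p+q+1}/2) { (f(a)^2+f(b)^2)[B(p+1,q+3) + B(q+1,p+3)] + 4 f(a) f(b) B(p+2,q+2) }, where B is the Euler Beta function. -/
/-!
By convexity, `f x` and `f (a + b - x)` lie below the chords through `(a, f a)` and `(b, f b)`.
Writing `u = x - a`, `v = b - x`, the product of the two chords is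
`(v f a + u f b)(u f a + v f b) / (b - a)²`, which falls short of
`((f a² + f b²)(u² + v²) + 4 f a f b u v) / (2 (b - a)²)` by `(u - v)² (f a - f b)² / (2 (b - a)²)`.
Multiplying by `u^p v^q` and integrating, each monomial `u^r v^s` contributes the Beta integral
`(b - a)^(r + s + 1) B(r + 1, s + 1)` after the substitution `x = a + (b - a) t`.
-/

open MeasureTheory Set

noncomputable def eulerBeta (m n : ℝ) : ℝ := ∫ t in (0:ℝ)..1, t ^ (m - 1) * (1 - t) ^ (n - 1)

lemma eulerBeta_comm (m n : ℝ) : eulerBeta m n = eulerBeta n m := by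
  have h := intervalIntegral.integral_comp_sub_left
    (fun t : ℝ => t ^ (n - 1) * (1 - t) ^ (m - 1)) (a := 0) (b := 1) 1
  norm_num at h
  rw [eulerBeta, eulerBeta, ← h]
  simp only [mul_comm]

lemma integral_sub_rpow_mul_rpow_sub {a b : ℝ} (hab : a < b) (r s : ℝ) :
    ∫ x in a..b, (x - a) ^ r * (b - x) ^ s = (b - a) ^ (r + s + 1) * eulerBeta (r + 1) (s + 1) := by
  have hL : 0 < b - a := sub_pos.2 hab
  have hsubst := intervalIntegral.smul_integral_comp_mul_add
    (fun x : ℝ => (x - a) ^ r * (b - x) ^ s) (b - a) a (a := 0) (b := 1)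
  rw [mul_zero, zero_add, mul_one, sub_add_cancel] at hsubst
  have hscale : ∫ t in (0:ℝ)..1, ((b - a) * t + a - a) ^ r * (b - ((b - a) * t + a)) ^ s =
      ∫ t in (0:ℝ)..1, (b - a) ^ r * (b - a) ^ s * (t ^ r * (1 - t) ^ s) := by
    refine intervalIntegral.integral_congr fun t ht => ?_
    rw [uIcc_of_le zero_le_one] at ht
    have hbt : b - ((b - a) * t + a) = (b - a) * (1 - t) := by ring
    simp only [add_sub_cancel_right, hbt]
    rw [Real.mul_rpow hL.le ht.1, Real.mul_rpow hL.le (sub_nonneg.2 ht.2)]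
    ring
  rw [← hsubst, hscale, intervalIntegral.integral_const_mul, eulerBeta, add_sub_cancel_right,
    add_sub_cancel_right, smul_eq_mul, Real.rpow_add hL, Real.rpow_add hL, Real.rpow_one]
  ring

lemma continuous_sub_rpow_mul_rpow_sub (a b : ℝ) {r s : ℝ} (hr : 0 ≤ r) (hs : 0 ≤ s) :
    Continuous fun x : ℝ => (x - a) ^ r * (b - x) ^ s :=
  ((continuous_id.sub continuous_const).rpow_const fun _ => Or.inr hr).mul
    ((continuous_const.sub continuous_id).rpow_const fun _ => Or.inr hs)

lemma integral_sub_rpow_mul_rpow_sub_mul_quadratic {a b p q : ℝ} (hab : a < b) (hp : 0 ≤ p)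
    (hq : 0 ≤ q) (α β : ℝ) :
    ∫ x in a..b, (x - a) ^ p * (b - x) ^ q *
        (α * ((x - a) ^ 2 + (b - x) ^ 2) + β * ((x - a) * (b - x))) =
      (b - a) ^ (p + q + 3) * (α * (eulerBeta (p + 1) (q + 3) + eulerBeta (q + 1) (p + 3)) +
        β * eulerBeta (p + 2) (q + 2)) := by
  have hexpand : ∀ x ∈ uIcc a b,
      (x - a) ^ p * (b - x) ^ q * (α * ((x - a) ^ 2 + (b - x) ^ 2) + β * ((x - a) * (b - x))) =
        α * ((x - a) ^ p * (b - x) ^ (q + 2)) + α * ((x - a) ^ (p + 2) * (b - x) ^ q) +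
          β * ((x - a) ^ (p + 1) * (b - x) ^ (q + 1)) := by
    intro x hx
    rw [uIcc_of_le hab.le] at hx
    have hu : 0 ≤ x - a := sub_nonneg.2 hx.1
    have hv : 0 ≤ b - x := sub_nonneg.2 hx.2
    rw [Real.rpow_add' hu (by positivity), Real.rpow_add' hv (by positivity),
      Real.rpow_add' hu (by positivity), Real.rpow_add' hv (by positivity),
      Real.rpow_two, Real.rpow_two, Real.rpow_one, Real.rpow_one]
    ring
  have hint : ∀ r s : ℝ, 0 ≤ r → 0 ≤ s →
      IntervalIntegrable (fun x => (x - a) ^ r * (b - x) ^ s) volume a b := fun r s hr hs =>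
    (continuous_sub_rpow_mul_rpow_sub a b hr hs).intervalIntegrable a b
  rw [intervalIntegral.integral_congr hexpand, intervalIntegral.integral_add,
    intervalIntegral.integral_add, intervalIntegral.integral_const_mul,
    intervalIntegral.integral_const_mul, intervalIntegral.integral_const_mul,
    integral_sub_rpow_mul_rpow_sub hab, integral_sub_rpow_mul_rpow_sub hab,
    integral_sub_rpow_mul_rpow_sub hab, eulerBeta_comm (p + 2 + 1)]
  · ring_nf
  · exact (hint p (q + 2) hp (by positivity)).const_mul α
  · exact (hint (p + 2) q (by positivity) hq).const_mul α
  · exact ((hint p (q + 2) hp (by positivity)).const_mul α).add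
      ((hint (p + 2) q (by positivity) hq).const_mul α)
  · exact (hint (p + 1) (q + 1) (by positivity) (by positivity)).const_mul β

lemma ConvexOn.le_chord {s : Set ℝ} {f : ℝ → ℝ} (hf : ConvexOn ℝ s f) {a b x : ℝ} (ha : a ∈ s)
    (hb : b ∈ s) (hab : a < b) (hx : x ∈ Icc a b) :
    f x ≤ ((b - x) * f a + (x - a) * f b) / (b - a) := by
  have hL : 0 < b - a := sub_pos.2 hab
  have hcomb := hf.2 ha hb (div_nonneg (sub_nonneg.2 hx.2) hL.le)
    (div_nonneg (sub_nonneg.2 hx.1) hL.le) (by field_simp; ring)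
  have hpoint : (b - x) / (b - a) * a + (x - a) / (b - a) * b = x := by
    field_simp; ring
  simp only [smul_eq_mul, hpoint] at hcomb
  calc f x ≤ (b - x) / (b - a) * f a + (x - a) / (b - a) * f b := hcomb
    _ = ((b - x) * f a + (x - a) * f b) / (b - a) := by ring

lemma ConvexOn.mul_comp_reflect_le {f : ℝ → ℝ} {a b x : ℝ} (hab : a < b)
    (hf : ConvexOn ℝ (Icc a b) f) (hf₀ : ∀ x ∈ Icc a b, 0 ≤ f x) (hx : x ∈ Icc a b) :
    f x * f (a + b - x) ≤
      ((f a ^ 2 + f b ^ 2) * ((x - a) ^ 2 + (b - x) ^ 2) + 4 * f a * f b * ((x - a) * (b - x))) /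
        (2 * (b - a) ^ 2) := by
  have ha : a ∈ Icc a b := left_mem_Icc.2 hab.le
  have hb : b ∈ Icc a b := right_mem_Icc.2 hab.le
  have hx' : a + b - x ∈ Icc a b := ⟨by linarith [hx.2], by linarith [hx.1]⟩
  have h₁ := hf.le_chord ha hb hab hx
  have h₂ := hf.le_chord ha hb hab hx'
  rw [show b - (a + b - x) = x - a by ring, show a + b - x - a = b - x by ring] at h₂
  have hprod := mul_le_mul h₁ h₂ (hf₀ _ hx') ((hf₀ x hx).trans h₁)
  rw [div_mul_div_comm] at hprod
  refine hprod.trans ?_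
  rw [div_le_div_iff₀ (by nlinarith) (by nlinarith)]
  nlinarith [sq_nonneg ((x - a - (b - x)) * (f a - f b)), sq_nonneg (b - a)]

theorem cor_2_3_general (f : ℝ → ℝ) (a b : ℝ) (hab : a < b)
    (hf : ContinuousOn f (Icc a b)) (hnn : ∀ x ∈ Icc a b, 0 ≤ f x)
    (hconv : ConvexOn ℝ (Icc a b) f)
    (p q : ℝ) (hp : 0 < p) (hq : 0 < q) :
    ∫ x in a..b, (x - a) ^ p * (b - x) ^ q * (f x * f (a + b - x)) ≤
      (b - a) ^ (p + q + 1) / 2 *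
        ((f a ^ 2 + f b ^ 2) * (eulerBeta (p + 1) (q + 3) + eulerBeta (q + 1) (p + 3)) +
          4 * f a * f b * eulerBeta (p + 2) (q + 2)) := by
  have hL : 0 < b - a := sub_pos.2 hab
  set Q : ℝ → ℝ := fun x => (f a ^ 2 + f b ^ 2) * ((x - a) ^ 2 + (b - x) ^ 2) +
    4 * f a * f b * ((x - a) * (b - x))
  have hw := continuous_sub_rpow_mul_rpow_sub a b hp.le hq.le
  have hreflect : ContinuousOn (fun x => f (a + b - x)) (Icc a b) :=
    hf.comp (by fun_prop) fun x hx => ⟨by linarith [hx.2], by linarith [hx.1]⟩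
  calc _ ≤ ∫ x in a..b, (x - a) ^ p * (b - x) ^ q * Q x / (2 * (b - a) ^ 2) := by
        refine intervalIntegral.integral_mono_on hab.le ?_ ?_ fun x hx => ?_
        · exact (hw.continuousOn.mul (hf.mul hreflect)).intervalIntegrable_of_Icc hab.le
        · exact ((hw.mul (by fun_prop)).div_const _).intervalIntegrable a b
        · rw [mul_div_assoc]
          exact mul_le_mul_of_nonneg_left (hconv.mul_comp_reflect_le hab hnn hx)
            (mul_nonneg (Real.rpow_nonneg (sub_nonneg.2 hx.1) p)
              (Real.rpow_nonneg (sub_nonneg.2 hx.2) q))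
    _ = (∫ x in a..b, (x - a) ^ p * (b - x) ^ q * Q x) / (2 * (b - a) ^ 2) :=
        intervalIntegral.integral_div _ _
    _ = _ := by
        rw [integral_sub_rpow_mul_rpow_sub_mul_quadratic hab hp.le hq.le,
          show p + q + 3 = p + q + 1 + 2 by ring, Real.rpow_add hL, Real.rpow_two]
        field_simp

theorem cor_2_3 (f : ℝ → ℝ) (a b : ℝ) (ha : 0 ≤ a) (hab : a < b)
    (hf : ContinuousOn f (Icc a b)) (hnn : ∀ x ∈ Icc a b, 0 ≤ f x)
    (hconv : ConvexOn ℝ (Icc a b) f)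
    (p q : ℝ) (hp : 0 < p) (hq : 0 < q) :
    ∫ x in a..b, (x - a) ^ p * (b - x) ^ q * (f x * f (a + b - x)) ≤
      (b - a) ^ (p + q + 1) / 2 *
        ((f a ^ 2 + f b ^ 2) * (eulerBeta (p + 1) (q + 3) + eulerBeta (q + 1) (p + 3)) +
          4 * f a * f b * eulerBeta (p + 2) (q + 2)) :=
  cor_2_3_general f a b hab hf hnn hconv p q hp hq
end

section
/- Let f : [a,b] ⊆ [0,∞) → [0,∞) be continuous, quasi-convex, and monotone decreasing, 0 ≤ a < b, p, q > 0. Then ∫_a^b (x-a)^p (b-x)^q f(x) f(a+b-x) dx ≤ (b-a)^{p+q+1} f(a)^2 B(p+1, q+1). -/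
/-! Since `f` is nonnegative and antitone, `f x * f (a + b - x) ≤ f a ^ 2`, so the integral is
bounded by `f a ^ 2` times the weight integral, which the substitution `x = a + (b - a) t` turns
into `(b - a) ^ (p + q + 1)` times a Beta value. -/

open MeasureTheory Set

/-- Only the dominating function needs to be integrable: if `f` is not, its integral is `0`. -/
theorem intervalIntegral_mono_of_nonneg {f g : ℝ → ℝ} {a b : ℝ} (hab : a ≤ b)
    (hf : ∀ x ∈ Ioc a b, 0 ≤ f x) (h : ∀ x ∈ Ioc a b, f x ≤ g x)
    (hg : IntervalIntegrable g volume a b) :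
    ∫ x in a..b, f x ≤ ∫ x in a..b, g x := by
  simp only [intervalIntegral.integral_of_le hab]
  exact setIntegral_mono_of_nonneg hf h hg.1

theorem integral_sub_rpow_mul_sub_rpow {a b : ℝ} (hab : a < b) (p q : ℝ) :
    ∫ x in a..b, (x - a) ^ p * (b - x) ^ q =
      (b - a) ^ (p + q + 1) * eulerBeta (p + 1) (q + 1) := by
  have hba : 0 < b - a := sub_pos.2 hab
  have hsubst : ∫ x in a..b, (x - a) ^ p * (b - x) ^ q =
      (b - a) * ∫ t in (0:ℝ)..1, ((b - a) * t) ^ p * ((b - a) * (1 - t)) ^ q := by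
    have := intervalIntegral.mul_integral_comp_mul_add (a := 0) (b := 1) (c := b - a) (d := a)
      (f := fun x => (x - a) ^ p * (b - x) ^ q)
    simp only [mul_zero, zero_add, mul_one, sub_add_cancel, add_sub_cancel_right] at this
    rw [← this]
    congr 1
    refine intervalIntegral.integral_congr fun t _ => ?_
    ring_nf
  have hscale : ∀ t ∈ uIcc (0:ℝ) 1, ((b - a) * t) ^ p * ((b - a) * (1 - t)) ^ q =
      (b - a) ^ p * (b - a) ^ q * (t ^ (p + 1 - 1) * (1 - t) ^ (q + 1 - 1)) := by
    intro t ht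
    rw [uIcc_of_le zero_le_one] at ht
    rw [Real.mul_rpow hba.le ht.1, Real.mul_rpow hba.le (sub_nonneg.2 ht.2),
      add_sub_cancel_right, add_sub_cancel_right]
    ring
  rw [hsubst, intervalIntegral.integral_congr hscale, intervalIntegral.integral_const_mul,
    eulerBeta, Real.rpow_add hba, Real.rpow_add hba, Real.rpow_one]
  ring

theorem add_sub_mem_Icc {a b x : ℝ} (hx : x ∈ Icc a b) : a + b - x ∈ Icc a b :=
  ⟨by linarith [hx.2], by linarith [hx.1]⟩

theorem mul_apply_add_sub_le_sq_of_antitoneOn {f : ℝ → ℝ} {a b x : ℝ}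
    (hnn : ∀ y ∈ Icc a b, 0 ≤ f y) (hmono : AntitoneOn f (Icc a b)) (hx : x ∈ Icc a b) :
    f x * f (a + b - x) ≤ f a ^ 2 := by
  have ha : a ∈ Icc a b := ⟨le_rfl, hx.1.trans hx.2⟩
  have hx' := add_sub_mem_Icc hx
  rw [sq]
  exact mul_le_mul (hmono ha hx hx.1) (hmono ha hx' hx'.1) (hnn _ hx') (hnn a ha)

theorem cor_2_5_dec_general (f : ℝ → ℝ) (a b : ℝ) (hab : a < b)
    (hnn : ∀ x ∈ Icc a b, 0 ≤ f x)
    (hmono : AntitoneOn f (Icc a b))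
    (p q : ℝ) (hp : 0 < p) (hq' : 0 < q) :
    ∫ x in a..b, (x - a) ^ p * (b - x) ^ q * (f x * f (a + b - x)) ≤
      (b - a) ^ (p + q + 1) * f a ^ 2 * eulerBeta (p + 1) (q + 1) := by
  have hweight : ∀ x ∈ Icc a b, 0 ≤ (x - a) ^ p * (b - x) ^ q := fun x hx =>
    mul_nonneg (Real.rpow_nonneg (sub_nonneg.2 hx.1) p) (Real.rpow_nonneg (sub_nonneg.2 hx.2) q)
  have hcont : Continuous fun x : ℝ => (x - a) ^ p * (b - x) ^ q * f a ^ 2 :=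
    (((Real.continuous_rpow_const hp.le).comp (continuous_sub_right a)).mul
      ((Real.continuous_rpow_const hq'.le).comp (continuous_sub_left b))).mul continuous_const
  calc ∫ x in a..b, (x - a) ^ p * (b - x) ^ q * (f x * f (a + b - x))
      ≤ ∫ x in a..b, (x - a) ^ p * (b - x) ^ q * f a ^ 2 := by
        refine intervalIntegral_mono_of_nonneg hab.le (fun x hx => ?_) (fun x hx => ?_)
          (hcont.intervalIntegrable a b) <;> replace hx := Ioc_subset_Icc_self hx
        · exact mul_nonneg (hweight x hx) (mul_nonneg (hnn x hx) (hnn _ (add_sub_mem_Icc hx)))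
        · exact mul_le_mul_of_nonneg_left
            (mul_apply_add_sub_le_sq_of_antitoneOn hnn hmono hx) (hweight x hx)
    _ = (b - a) ^ (p + q + 1) * f a ^ 2 * eulerBeta (p + 1) (q + 1) := by
        rw [intervalIntegral.integral_mul_const, integral_sub_rpow_mul_sub_rpow hab]
        ring

theorem cor_2_5_dec (f : ℝ → ℝ) (a b : ℝ) (ha : 0 ≤ a) (hab : a < b)
    (hf : ContinuousOn f (Icc a b)) (hnn : ∀ x ∈ Icc a b, 0 ≤ f x)
    (hq : ∀ x ∈ Icc a b, ∀ y ∈ Icc a b, ∀ α : ℝ, 0 ≤ α → α ≤ 1 →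
      f (α * x + (1 - α) * y) ≤ max (f x) (f y))
    (hmono : AntitoneOn f (Icc a b))
    (p q : ℝ) (hp : 0 < p) (hq' : 0 < q) :
    ∫ x in a..b, (x - a) ^ p * (b - x) ^ q * (f x * f (a + b - x)) ≤
      (b - a) ^ (p + q + 1) * f a ^ 2 * eulerBeta (p + 1) (q + 1) :=
  cor_2_5_dec_general f a b hab hnn hmono p q hp hq'
end

section
/- Let f : [a,b] ⊆ [0,∞) → [0,∞) be continuous, 0 ≤ a < b, with f in the Godunova–Levin class Q, f(a) = f(b), and p, q > 1. Then ∫_a^b (x-a)^p (b-x)^q f(x) f(a+b-x) dx ≤ (b-a)^{p+q+1} f(a)^2 ( B(p+1,q-1) + 2 B(p,q) + B(p-1,q+1) ). -/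
/-!
Substituting `x = a + t (b - a)`, the Godunova–Levin inequality between the endpoints gives
`f x ≤ f b / t + f a / (1 - t) = f a / (t (1 - t))`, and the same bound for `f (a + b - x)`
(parameter `1 - t`). Hence the integrand is at most
`(b - a) ^ (p + q) f(a)² t ^ (p - 2) (1 - t) ^ (q - 2)`,
whose integral is `(b - a) ^ (p + q) f(a)² B(p - 1, q - 1)`; and the recurrence
`B(m + 1, n) + B(m, n + 1) = B(m, n)`, applied three times, rewrites `B(p - 1, q - 1)` as the sum
of the three Beta values.
-/

open MeasureTheory Set

theorem intervalIntegrable_rpow_mul_one_sub_rpow {r s : ℝ} (hr : -1 < r) (hs : -1 < s) :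
    IntervalIntegrable (fun t : ℝ => t ^ r * (1 - t) ^ s) volume 0 1 := by
  have left : ∀ {r : ℝ} (s : ℝ), -1 < r →
      IntervalIntegrable (fun t : ℝ => t ^ r * (1 - t) ^ s) volume 0 (1 / 2) := by
    intro r s hr
    refine (intervalIntegral.intervalIntegrable_rpow' hr).mul_continuousOn ?_
    refine ContinuousOn.rpow_const (f := fun t : ℝ => 1 - t) (by fun_prop) fun t ht => Or.inl ?_
    rw [uIcc_of_le (by norm_num)] at ht
    exact (by linarith [ht.2] : (0 : ℝ) < 1 - t).ne'
  have right : IntervalIntegrable (fun t : ℝ => t ^ r * (1 - t) ^ s) volume (1 / 2) 1 := by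
    have h := ((left r hs).comp_sub_left 1).symm
    norm_num only [sub_sub_cancel] at h
    simpa only [mul_comm] using h
  exact (left s hr).trans right

theorem eulerBeta_add_one_add {m n : ℝ} (hm : 0 < m) (hn : 0 < n) :
    eulerBeta (m + 1) n + eulerBeta m (n + 1) = eulerBeta m n := by
  simp only [eulerBeta, add_sub_cancel_right]
  rw [← intervalIntegral.integral_add
    (intervalIntegrable_rpow_mul_one_sub_rpow (by linarith) (by linarith))
    (intervalIntegrable_rpow_mul_one_sub_rpow (by linarith) (by linarith))]
  refine intervalIntegral.integral_congr fun t ht => ?_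
  rw [uIcc_of_le zero_le_one] at ht
  have split : ∀ {x y : ℝ}, 0 ≤ x → y ≠ 0 → x ^ y = x ^ (y - 1) * x := fun hx hy => by
    rw [← Real.rpow_add_one' hx (by simpa using hy), sub_add_cancel]
  rw [split ht.1 hm.ne', split (sub_nonneg.2 ht.2) hn.ne']
  ring

theorem eulerBeta_sub_one_sub_one {p q : ℝ} (hp : 1 < p) (hq : 1 < q) :
    eulerBeta (p + 1) (q - 1) + 2 * eulerBeta p q + eulerBeta (p - 1) (q + 1) =
      eulerBeta (p - 1) (q - 1) := by
  have h₁ := eulerBeta_add_one_add (m := p) (n := q - 1) (by linarith) (by linarith)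
  have h₂ := eulerBeta_add_one_add (m := p - 1) (n := q) (by linarith) (by linarith)
  have h₃ := eulerBeta_add_one_add (m := p - 1) (n := q - 1) (by linarith) (by linarith)
  simp only [sub_add_cancel] at h₁ h₂ h₃
  linarith

-- No integrability of `f` is needed: otherwise its integral is the junk value `0`.
theorem intervalIntegral.integral_le_of_nonneg_of_le_Ioo {f g : ℝ → ℝ} {a b : ℝ}
    (hab : a ≤ b) (hg : IntervalIntegrable g volume a b) (hf : ∀ x ∈ Ioo a b, 0 ≤ f x)
    (hfg : ∀ x ∈ Ioo a b, f x ≤ g x) :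
    ∫ x in a..b, f x ≤ ∫ x in a..b, g x := by
  simp only [intervalIntegral.integral_of_le hab, integral_Ioc_eq_integral_Ioo]
  exact integral_mono_of_nonneg (ae_restrict_of_forall_mem measurableSet_Ioo hf)
    (hg.1.mono_set Ioo_subset_Ioc_self) (ae_restrict_of_forall_mem measurableSet_Ioo hfg)

noncomputable def reflectedProductIntegrand (f : ℝ → ℝ) (a b p q x : ℝ) : ℝ :=
  (x - a) ^ p * (b - x) ^ q * (f x * f (a + b - x))

theorem reflectedProductIntegrand_nonneg {f : ℝ → ℝ} {a b p q x : ℝ}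
    (hnn : ∀ x ∈ Icc a b, 0 ≤ f x) (hx : x ∈ Icc a b) :
    0 ≤ reflectedProductIntegrand f a b p q x :=
  mul_nonneg (mul_nonneg (Real.rpow_nonneg (sub_nonneg.2 hx.1) p)
    (Real.rpow_nonneg (sub_nonneg.2 hx.2) q))
    (mul_nonneg (hnn x hx) (hnn _ ⟨by linarith [hx.2], by linarith [hx.1]⟩))

theorem intervalIntegral.integral_eq_sub_mul_integral_comp_mul_add (F : ℝ → ℝ) (a b : ℝ) :
    ∫ x in a..b, F x = (b - a) * ∫ t in (0 : ℝ)..1, F ((b - a) * t + a) := by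
  rw [← smul_eq_mul, intervalIntegral.smul_integral_comp_mul_add, mul_zero, zero_add, mul_one,
    sub_add_cancel]

def IsGodunovaLevinOn (s : Set ℝ) (f : ℝ → ℝ) : Prop :=
  ∀ x ∈ s, ∀ y ∈ s, ∀ lam : ℝ, 0 < lam → lam < 1 →
    f (lam * x + (1 - lam) * y) ≤ f x / lam + f y / (1 - lam)

namespace IsGodunovaLevinOn

variable {f : ℝ → ℝ} {a b t : ℝ}

theorem apply_le_div_of_eq (hf : IsGodunovaLevinOn (Icc a b) f) (hab : a ≤ b) (hfab : f a = f b)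
    (ht₀ : 0 < t) (ht₁ : t < 1) : f (t * b + (1 - t) * a) ≤ f a / (t * (1 - t)) := by
  have h := hf b ⟨hab, le_rfl⟩ a ⟨le_rfl, hab⟩ t ht₀ ht₁
  have hs : 0 < 1 - t := sub_pos.2 ht₁
  calc f (t * b + (1 - t) * a) ≤ f a / t + f a / (1 - t) := hfab ▸ h
    _ = f a / (t * (1 - t)) := by field_simp; ring

theorem apply_mul_apply_reflect_le (hf : IsGodunovaLevinOn (Icc a b) f)
    (hnn : ∀ x ∈ Icc a b, 0 ≤ f x) (hab : a ≤ b) (hfab : f a = f b)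
    (ht₀ : 0 < t) (ht₁ : t < 1) :
    f (t * b + (1 - t) * a) * f ((1 - t) * b + t * a) ≤ f a ^ 2 / (t * (1 - t)) ^ 2 := by
  have h₁ := hf.apply_le_div_of_eq hab hfab ht₀ ht₁
  have h₂ := hf.apply_le_div_of_eq hab hfab (sub_pos.2 ht₁) (sub_lt_self 1 ht₀)
  rw [sub_sub_cancel, mul_comm (1 - t) t] at h₂
  have hy : (1 - t) * b + t * a ∈ Icc a b := by constructor <;> nlinarith
  calc _ ≤ f a / (t * (1 - t)) * (f a / (t * (1 - t))) :=
        mul_le_mul h₁ h₂ (hnn _ hy) ((hnn _ hy).trans h₂)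
    _ = f a ^ 2 / (t * (1 - t)) ^ 2 := by rw [← sq, div_pow]

theorem reflectedProductIntegrand_le (hf : IsGodunovaLevinOn (Icc a b) f)
    (hnn : ∀ x ∈ Icc a b, 0 ≤ f x) (hab : a < b) (hfab : f a = f b) (p q : ℝ)
    (ht₀ : 0 < t) (ht₁ : t < 1) :
    reflectedProductIntegrand f a b p q ((b - a) * t + a) ≤
      (b - a) ^ (p + q) * f a ^ 2 * (t ^ (p - 2) * (1 - t) ^ (q - 2)) := by
  have hba : 0 < b - a := sub_pos.2 hab
  have hs : 0 < 1 - t := sub_pos.2 ht₁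
  have hsubst : reflectedProductIntegrand f a b p q ((b - a) * t + a) =
      ((b - a) * t) ^ p * ((b - a) * (1 - t)) ^ q *
        (f (t * b + (1 - t) * a) * f ((1 - t) * b + t * a)) := by
    simp only [reflectedProductIntegrand]; ring_nf
  rw [hsubst]
  calc _ ≤ ((b - a) * t) ^ p * ((b - a) * (1 - t)) ^ q * (f a ^ 2 / (t * (1 - t)) ^ 2) := by
        gcongr
        exact hf.apply_mul_apply_reflect_le hnn hab.le hfab ht₀ ht₁
    _ = _ := by
        rw [Real.mul_rpow hba.le ht₀.le, Real.mul_rpow hba.le hs.le, Real.rpow_add hba,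
          Real.rpow_sub ht₀, Real.rpow_sub hs, Real.rpow_two, Real.rpow_two]
        field_simp

end IsGodunovaLevinOn

theorem cor_2_6_general (f : ℝ → ℝ) (a b : ℝ) (hab : a < b)
    (hnn : ∀ x ∈ Icc a b, 0 ≤ f x)
    (hQ : ∀ x ∈ Icc a b, ∀ y ∈ Icc a b, ∀ lam : ℝ, 0 < lam → lam < 1 →
      f (lam * x + (1 - lam) * y) ≤ f x / lam + f y / (1 - lam))
    (hfab : f a = f b)
    (p q : ℝ) (hp : 1 < p) (hq : 1 < q) :
    ∫ x in a..b, (x - a) ^ p * (b - x) ^ q * (f x * f (a + b - x)) ≤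
      (b - a) ^ (p + q + 1) * f a ^ 2 *
        (eulerBeta (p + 1) (q - 1) + 2 * eulerBeta p q + eulerBeta (p - 1) (q + 1)) := by
  have hba : 0 < b - a := sub_pos.2 hab
  have hmem : ∀ t ∈ Ioo (0 : ℝ) 1, (b - a) * t + a ∈ Icc a b :=
    fun t ⟨ht₀, ht₁⟩ => by constructor <;> nlinarith
  change ∫ x in a..b, reflectedProductIntegrand f a b p q x ≤ _
  calc ∫ x in a..b, reflectedProductIntegrand f a b p q x
      = (b - a) * ∫ t in (0 : ℝ)..1, reflectedProductIntegrand f a b p q ((b - a) * t + a) :=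
        intervalIntegral.integral_eq_sub_mul_integral_comp_mul_add _ a b
    _ ≤ (b - a) * ∫ t in (0 : ℝ)..1,
          (b - a) ^ (p + q) * f a ^ 2 * (t ^ (p - 2) * (1 - t) ^ (q - 2)) := by
        gcongr
        exact intervalIntegral.integral_le_of_nonneg_of_le_Ioo zero_le_one
          ((intervalIntegrable_rpow_mul_one_sub_rpow (by linarith) (by linarith)).const_mul _)
          (fun t ht => reflectedProductIntegrand_nonneg hnn (hmem t ht))
          (fun t ⟨ht₀, ht₁⟩ =>
            IsGodunovaLevinOn.reflectedProductIntegrand_le hQ hnn hab hfab p q ht₀ ht₁)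
    _ = (b - a) ^ (p + q + 1) * f a ^ 2 * eulerBeta (p - 1) (q - 1) := by
        simp only [intervalIntegral.integral_const_mul, Real.rpow_add_one hba.ne', eulerBeta,
          sub_sub, one_add_one_eq_two]
        ring
    _ = _ := by rw [eulerBeta_sub_one_sub_one hp hq]

theorem cor_2_6 (f : ℝ → ℝ) (a b : ℝ) (ha : 0 ≤ a) (hab : a < b)
    (hf : ContinuousOn f (Icc a b)) (hnn : ∀ x ∈ Icc a b, 0 ≤ f x)
    (hQ : ∀ x ∈ Icc a b, ∀ y ∈ Icc a b, ∀ lam : ℝ, 0 < lam → lam < 1 →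
      f (lam * x + (1 - lam) * y) ≤ f x / lam + f y / (1 - lam))
    (hfab : f a = f b)
    (p q : ℝ) (hp : 1 < p) (hq : 1 < q) :
    ∫ x in a..b, (x - a) ^ p * (b - x) ^ q * (f x * f (a + b - x)) ≤
      (b - a) ^ (p + q + 1) * f a ^ 2 *
        (eulerBeta (p + 1) (q - 1) + 2 * eulerBeta p q + eulerBeta (p - 1) (q + 1)) :=
  cor_2_6_general f a b hab hnn hQ hfab p q hp hq
end
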